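/- arXiv:1705.03099 — 6 statements merged into one kernel-verified Lean document; each statement's English description precedes it below -/
import Mathlib

section
/- For all real parameters a > 2 and b > 0, the function r ↦ (1 − exp(−b·r^{−a}))·r is Lebesgue integrable on (0, ∞) and ∫₀^∞ (1 − exp(−b·r^{−a}))·r dr = (1/2)·b^{2/a}·Γ(1 − 2/a), where Γ is the Gamma function. -/
open MeasureTheory Real Set Filter Topology

/-!
Integrating by parts against `r ^ 2 / 2` (the boundary terms vanish because
`0 ≤ 1 - exp (-t) ≤ min 1 t`) turns the integral into
`a b / 2 · ∫ r ^ (1 - a) exp (-b r ^ (-a)) dr`, and the substitution `r = x⁻¹` makes this the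
Gamma-type integral `∫ x ^ (a - 3) exp (-b x ^ a) dx`.
-/

section Inversion

variable {p q b : ℝ}

lemma inv_substitution_rpow_mul_exp_neg_mul_rpow_neg {x : ℝ} (hx : 0 < x) :
    (|(-1 : ℝ)| * x ^ ((-1 : ℝ) - 1)) • ((x ^ (-1 : ℝ)) ^ p * exp (-b * (x ^ (-1 : ℝ)) ^ (-q))) =
      x ^ (-p - 2) * exp (-b * x ^ q) := by
  rw [← rpow_mul hx.le, ← rpow_mul hx.le, smul_eq_mul, abs_neg, abs_one, one_mul, ← mul_assoc,
    ← rpow_add hx]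
  ring_nf

lemma integrableOn_rpow_mul_exp_neg_mul_rpow_neg (hp : p < -1) (hq : 0 < q) (hb : 0 < b) :
    IntegrableOn (fun x : ℝ ↦ x ^ p * exp (-b * x ^ (-q))) (Ioi 0) := by
  rw [← integrableOn_Ioi_comp_rpow_iff _ (by norm_num : (-1 : ℝ) ≠ 0)]
  refine (integrableOn_rpow_mul_exp_neg_mul_rpow (s := -p - 2) (by linarith) hq hb).congr_fun
    (fun x hx ↦ ?_) measurableSet_Ioi
  exact (inv_substitution_rpow_mul_exp_neg_mul_rpow_neg hx).symm

lemma integral_rpow_mul_exp_neg_mul_rpow_neg (hp : p < -1) (hq : 0 < q) (hb : 0 < b) :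
    ∫ x in Ioi (0 : ℝ), x ^ p * exp (-b * x ^ (-q)) =
      b ^ ((p + 1) / q) * (1 / q) * Gamma ((-p - 1) / q) := by
  rw [← integral_comp_rpow_Ioi _ (by norm_num : (-1 : ℝ) ≠ 0),
    setIntegral_congr_fun measurableSet_Ioi fun x hx ↦
      inv_substitution_rpow_mul_exp_neg_mul_rpow_neg hx,
    integral_rpow_mul_exp_neg_mul_rpow hq (by linarith) hb]
  ring_nf

end Inversion

lemma integrableOn_Ioi_zero_of_bounded_of_le_rpow {f : ℝ → ℝ} {M C s : ℝ} (hs : s < -1)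
    (hf : AEStronglyMeasurable f (volume.restrict (Ioi 0)))
    (h_bdd : ∀ r ∈ Ioc (0 : ℝ) 1, ‖f r‖ ≤ M) (h_decay : ∀ r ∈ Ioi (1 : ℝ), ‖f r‖ ≤ C * r ^ s) :
    IntegrableOn f (Ioi 0) := by
  rw [← Ioc_union_Ioi_eq_Ioi zero_le_one]
  refine IntegrableOn.union (Integrable.of_bound (hf.mono_set Ioc_subset_Ioi_self) M ?_)
    (((integrableOn_Ioi_rpow_of_lt hs zero_lt_one).const_mul C).mono'
      (hf.mono_set (Ioi_subset_Ioi zero_le_one)) ?_)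
  · exact (ae_restrict_mem measurableSet_Ioc).mono h_bdd
  · exact (ae_restrict_mem measurableSet_Ioi).mono h_decay

section Frechet

variable {a b : ℝ}

lemma hasDerivAt_one_sub_exp_neg_mul_rpow_neg {r : ℝ} (hr : 0 < r) :
    HasDerivAt (fun r : ℝ ↦ 1 - exp (-b * r ^ (-a)))
      (-(a * b) * (r ^ (-a - 1) * exp (-b * r ^ (-a)))) r :=
  ((((hasDerivAt_rpow_const (Or.inl hr.ne')).const_mul (-b)).exp).const_sub 1).congr_deriv
    (by ring)

lemma one_sub_exp_neg_mul_rpow_neg_nonneg (hb : 0 ≤ b) {r : ℝ} (hr : 0 ≤ r) :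
    0 ≤ 1 - exp (-b * r ^ (-a)) := by
  have : 0 ≤ b * r ^ (-a) := mul_nonneg hb (rpow_nonneg hr _)
  simpa [neg_mul] using exp_le_one_iff.mpr (neg_nonpos.mpr this)

lemma one_sub_exp_neg_mul_rpow_neg_le_one (r : ℝ) : 1 - exp (-b * r ^ (-a)) ≤ 1 := by
  linarith [exp_pos (-b * r ^ (-a))]

lemma one_sub_exp_neg_mul_rpow_neg_le (r : ℝ) : 1 - exp (-b * r ^ (-a)) ≤ b * r ^ (-a) := by
  rw [neg_mul]
  linarith [one_sub_le_exp_neg (b * r ^ (-a))]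

lemma integrableOn_one_sub_exp_neg_mul_rpow_neg_mul_self (ha : 2 < a) (hb : 0 ≤ b) :
    IntegrableOn (fun r : ℝ ↦ (1 - exp (-b * r ^ (-a))) * r) (Ioi 0) := by
  refine integrableOn_Ioi_zero_of_bounded_of_le_rpow (M := 1) (C := b) (s := 1 - a) (by linarith)
    (by fun_prop) (fun r hr ↦ ?_) (fun r hr ↦ ?_)
  · have hr0 : 0 ≤ r := hr.1.le
    rw [norm_of_nonneg (mul_nonneg (one_sub_exp_neg_mul_rpow_neg_nonneg hb hr0) hr0)]
    calc (1 - exp (-b * r ^ (-a))) * r ≤ 1 * 1 :=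
          mul_le_mul (one_sub_exp_neg_mul_rpow_neg_le_one r) hr.2 hr0 zero_le_one
      _ = 1 := one_mul 1
  · have hr0 : 0 < r := zero_lt_one.trans hr
    rw [norm_of_nonneg (mul_nonneg (one_sub_exp_neg_mul_rpow_neg_nonneg hb hr0.le) hr0.le)]
    calc (1 - exp (-b * r ^ (-a))) * r ≤ b * r ^ (-a) * r :=
          mul_le_mul_of_nonneg_right (one_sub_exp_neg_mul_rpow_neg_le r) hr0.le
      _ = b * r ^ (1 - a) := by rw [mul_assoc, ← rpow_add_one hr0.ne']; ring_nf

lemma tendsto_one_sub_exp_neg_mul_rpow_neg_mul_sq_nhdsGT_zero (hb : 0 ≤ b) :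
    Tendsto (fun r : ℝ ↦ (1 - exp (-b * r ^ (-a))) * (r ^ 2 / 2)) (𝓝[>] 0) (𝓝 0) := by
  have h_sq : Tendsto (fun r : ℝ ↦ r ^ 2 / 2) (𝓝[>] 0) (𝓝 0) := by
    simpa using ((continuous_pow 2).div_const (2 : ℝ)).tendsto' 0 0 (by simp) |>.mono_left
      nhdsWithin_le_nhds
  refine squeeze_zero' ?_ ?_ h_sq
  · filter_upwards [self_mem_nhdsWithin] with r (hr : 0 < r)
    exact mul_nonneg (one_sub_exp_neg_mul_rpow_neg_nonneg hb hr.le) (by positivity)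
  · filter_upwards with r
    simpa using mul_le_mul_of_nonneg_right (one_sub_exp_neg_mul_rpow_neg_le_one (a := a) (b := b) r)
      (by positivity : (0 : ℝ) ≤ r ^ 2 / 2)

lemma tendsto_one_sub_exp_neg_mul_rpow_neg_mul_sq_atTop (ha : 2 < a) (hb : 0 ≤ b) :
    Tendsto (fun r : ℝ ↦ (1 - exp (-b * r ^ (-a))) * (r ^ 2 / 2)) atTop (𝓝 0) := by
  have h_pow : Tendsto (fun r : ℝ ↦ b / 2 * r ^ (2 - a)) atTop (𝓝 0) := by
    simpa [show -(a - 2) = 2 - a by ring] using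
      (tendsto_rpow_neg_atTop (by linarith : 0 < a - 2)).const_mul (b / 2)
  refine squeeze_zero' ?_ ?_ h_pow
  · filter_upwards [eventually_gt_atTop 0] with r hr
    exact mul_nonneg (one_sub_exp_neg_mul_rpow_neg_nonneg hb hr.le) (by positivity)
  · filter_upwards [eventually_gt_atTop 0] with r hr
    calc (1 - exp (-b * r ^ (-a))) * (r ^ 2 / 2) ≤ b * r ^ (-a) * (r ^ 2 / 2) :=
          mul_le_mul_of_nonneg_right (one_sub_exp_neg_mul_rpow_neg_le r) (by positivity)
      _ = b / 2 * r ^ (2 - a) := by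
          rw [sub_eq_neg_add, rpow_add hr, rpow_two]
          ring

lemma integral_one_sub_exp_neg_mul_rpow_neg_mul_self (ha : 2 < a) (hb : 0 < b) :
    ∫ r in Ioi (0 : ℝ), (1 - exp (-b * r ^ (-a))) * r =
      a * b / 2 * ∫ r in Ioi (0 : ℝ), r ^ (1 - a) * exp (-b * r ^ (-a)) := by
  have h_u'v : ∀ r ∈ Ioi (0 : ℝ), -(a * b) * (r ^ (-a - 1) * exp (-b * r ^ (-a))) * (r ^ 2 / 2) =
      -(a * b / 2 * (r ^ (1 - a) * exp (-b * r ^ (-a)))) := fun r (hr : 0 < r) ↦ by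
    rw [show 1 - a = -a - 1 + 2 by ring, rpow_add hr, rpow_two]
    ring
  have h_ibp := integral_Ioi_mul_deriv_eq_deriv_mul (v := fun r ↦ r ^ 2 / 2) (v' := fun r ↦ r)
    (fun r hr ↦ hasDerivAt_one_sub_exp_neg_mul_rpow_neg (a := a) (b := b) hr)
    (fun r _ ↦ ((hasDerivAt_pow 2 r).div_const 2).congr_deriv (by ring))
    (integrableOn_one_sub_exp_neg_mul_rpow_neg_mul_self ha hb.le)
    (IntegrableOn.congr_fun (((integrableOn_rpow_mul_exp_neg_mul_rpow_neg (p := 1 - a) (q := a)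
      (by linarith) (by linarith) hb).const_mul (a * b / 2)).neg)
      (fun r hr ↦ (h_u'v r hr).symm) measurableSet_Ioi)
    (tendsto_one_sub_exp_neg_mul_rpow_neg_mul_sq_nhdsGT_zero hb.le)
    (tendsto_one_sub_exp_neg_mul_rpow_neg_mul_sq_atTop ha hb.le)
  rw [h_ibp, setIntegral_congr_fun measurableSet_Ioi h_u'v, integral_neg, integral_const_mul]
  ring

end Frechet

/-- For `a > 2`, `b > 0`, the function `r ↦ (1 − exp(−b·r^{−a}))·r` is integrable on `(0,∞)`
and its integral equals `(1/2)·b^{2/a}·Γ(1 − 2/a)`. -/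
theorem integrable_and_integral_one_sub_exp (a b : ℝ) (ha : 2 < a) (hb : 0 < b) :
    IntegrableOn (fun r : ℝ => (1 - Real.exp (-b * r ^ (-a))) * r) (Set.Ioi 0) ∧
    ∫ r in Set.Ioi (0 : ℝ), (1 - Real.exp (-b * r ^ (-a))) * r
      = (1 / 2) * b ^ (2 / a) * Real.Gamma (1 - 2 / a) := by
  refine ⟨integrableOn_one_sub_exp_neg_mul_rpow_neg_mul_self ha hb.le, ?_⟩
  rw [integral_one_sub_exp_neg_mul_rpow_neg_mul_self ha hb,
    integral_rpow_mul_exp_neg_mul_rpow_neg (by linarith) (by linarith) hb,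
    show (1 - a + 1) / a = 2 / a - 1 by field_simp; ring,
    show (-(1 - a) - 1) / a = 1 - 2 / a by field_simp; ring, rpow_sub hb, rpow_one]
  field_simp
end

section
/- For every s > 0, the function r ↦ (1 − exp(−s·g(r)))·r is Lebesgue integrable on (0, ∞), and the value Z(s) of this integral satisfies 0 < Z(s) < ∞. -/
/-!
Since `0 ≤ 1 - exp (-x) ≤ min 1 x` for `x ≥ 0`, the integrand is at most `r` near `0` and at most
`s g(r) r = O(r^(1-γ))` near `∞`, which is integrable at `∞` because `γ > 2`. As `g > 0`, the
integrand is positive on `(0, ∞)`, so the integral is positive.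
-/

open MeasureTheory Real Set

theorem setIntegral_pos_of_forall_pos {X : Type*} [MeasurableSpace X] {μ : Measure X}
    {s : Set X} {f : X → ℝ} (hs : MeasurableSet s) (hμ : μ s ≠ 0) (hf : ∀ x ∈ s, 0 < f x)
    (hfi : IntegrableOn f s μ) : 0 < ∫ x in s, f x ∂μ := by
  rw [setIntegral_pos_iff_support_of_nonneg_ae
    (ae_restrict_of_forall_mem hs fun x hx => (hf x hx).le) hfi,
    (inter_eq_right (s := Function.support f)).2 fun x hx => (hf x hx).ne']
  exact pos_iff_ne_zero.2 hμ

theorem norm_one_sub_exp_neg_mul_le {x r : ℝ} (hx : 0 ≤ x) (hr : 0 ≤ r) :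
    ‖(1 - exp (-x)) * r‖ ≤ min 1 x * r := by
  have h_nonneg : 0 ≤ 1 - exp (-x) := by linarith [exp_le_one_iff.2 (neg_nonpos.2 hx)]
  rw [norm_of_nonneg (mul_nonneg h_nonneg hr)]
  refine mul_le_mul_of_nonneg_right (le_min ?_ ?_) hr
  · linarith [exp_pos (-x)]
  · linarith [add_one_le_exp (-x)]

theorem integrableOn_Ioi_zero_one_sub_exp_neg_mul_mul_self {g : ℝ → ℝ} {s : ℝ} (hs : 0 ≤ s)
    (hg_meas : AEStronglyMeasurable g (volume.restrict (Ioi 0))) (hg : ∀ r > 0, 0 ≤ g r)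
    (hg_int : IntegrableOn (fun r => g r * r) (Ioi 1)) :
    IntegrableOn (fun r => (1 - exp (-s * g r)) * r) (Ioi 0) := by
  have hmeas : AEStronglyMeasurable (fun r => (1 - exp (-s * g r)) * r)
      (volume.restrict (Ioi 0)) := by fun_prop
  have hbound : ∀ r > 0, ‖(1 - exp (-s * g r)) * r‖ ≤ min 1 (s * g r) * r := fun r hr => by
    simpa only [neg_mul] using norm_one_sub_exp_neg_mul_le (mul_nonneg hs (hg r hr)) hr.le
  rw [← Ioc_union_Ioi_eq_Ioi zero_le_one]
  refine IntegrableOn.union ?_ ?_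
  · refine IntegrableOn.of_bound measure_Ioc_lt_top (hmeas.mono_set Ioc_subset_Ioi_self) 1 ?_
    refine ae_restrict_of_forall_mem measurableSet_Ioc fun r hr => (hbound r hr.1).trans ?_
    exact mul_le_one₀ (min_le_left _ _) hr.1.le hr.2
  · refine Integrable.mono' (hg_int.const_mul s) (hmeas.mono_set (Ioi_subset_Ioi zero_le_one)) ?_
    refine ae_restrict_of_forall_mem measurableSet_Ioi fun r hr =>
      (hbound r (zero_lt_one.trans hr)).trans ?_
    rw [← mul_assoc]
    exact mul_le_mul_of_nonneg_right (min_le_right _ _) (zero_le_one.trans hr.le)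

theorem integrableOn_Ioi_one_rpow_mul_add_mul_sq_mul_self {γ : ℝ} (hγ : 2 < γ) (a b : ℝ) :
    IntegrableOn (fun r => r ^ (-γ - 2) * (a + b * r ^ 2) * r) (Ioi 1) := by
  have h_eq : EqOn (fun r => a * r ^ (-γ - 2 + 1) + b * r ^ (-γ - 2 + (3 : ℕ)))
      (fun r => r ^ (-γ - 2) * (a + b * r ^ 2) * r) (Ioi 1) := fun r hr => by
    have hr : r ≠ 0 := (zero_lt_one.trans hr).ne'
    simp only [rpow_add_one hr, rpow_add_natCast hr]
    ring
  refine IntegrableOn.congr_fun (.add ?_ ?_) h_eq measurableSet_Ioi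
  · exact (integrableOn_Ioi_rpow_of_lt (by linarith) zero_lt_one).const_mul a
  · exact (integrableOn_Ioi_rpow_of_lt (by push_cast; linarith) zero_lt_one).const_mul b

theorem Z_welldefined_pos_general (γ We c : ℝ) (hγ : 2 < γ) (hWe : 0 < We)
    (g : ℝ → ℝ) (hg : ∀ r > 0, g r = r ^ (-γ - 2) * (γ ^ 2 + 4 * We * r ^ 2 / c ^ 2))
    (s : ℝ) (hs : 0 < s) :
    IntegrableOn (fun r : ℝ => (1 - Real.exp (-s * g r)) * r) (Set.Ioi 0) ∧
    0 < ∫ r in Set.Ioi (0 : ℝ), (1 - Real.exp (-s * g r)) * r := by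
  have hg_pos : ∀ r > 0, 0 < g r := fun r hr => by
    have : 0 < γ := by linarith
    rw [hg r hr]
    positivity
  have hg_cont : ContinuousOn g (Ioi 0) := by
    refine ContinuousOn.congr ?_ hg
    exact (continuousOn_id.rpow_const fun r hr => .inl (ne_of_gt hr)).mul (by fun_prop)
  have hg_int : IntegrableOn (fun r => g r * r) (Ioi 1) := by
    refine (integrableOn_Ioi_one_rpow_mul_add_mul_sq_mul_self hγ (γ ^ 2) (4 * We / c ^ 2)).congr_fun
      (fun r hr => ?_) measurableSet_Ioi
    dsimp only
    rw [hg r (zero_lt_one.trans hr)]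
    ring
  have hZ_int := integrableOn_Ioi_zero_one_sub_exp_neg_mul_mul_self hs.le
    (hg_cont.aestronglyMeasurable measurableSet_Ioi) (fun r hr => (hg_pos r hr).le) hg_int
  refine ⟨hZ_int, setIntegral_pos_of_forall_pos measurableSet_Ioi (by simp) (fun r hr => ?_) hZ_int⟩
  have h_exp_lt_one : exp (-s * g r) < 1 := exp_lt_one_iff.2 (by nlinarith [hg_pos r hr])
  exact mul_pos (by linarith) hr

/-- With `g(r) = r^{−γ−2}·(γ² + 4·W_e·r²/c²)`, for every `s > 0` the function
`r ↦ (1 − exp(−s·g(r)))·r` is Lebesgue integrable on `(0,∞)` and the value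
`Z(s)` of this integral satisfies `0 < Z(s)` (finiteness being integrability). -/
theorem Z_welldefined_pos (γ We c : ℝ) (hγ : 2 < γ) (hWe : 0 < We) (hc : 0 < c)
    (g : ℝ → ℝ) (hg : ∀ r > 0, g r = r ^ (-γ - 2) * (γ ^ 2 + 4 * We * r ^ 2 / c ^ 2))
    (s : ℝ) (hs : 0 < s) :
    IntegrableOn (fun r : ℝ => (1 - Real.exp (-s * g r)) * r) (Set.Ioi 0) ∧
    0 < ∫ r in Set.Ioi (0 : ℝ), (1 - Real.exp (-s * g r)) * r :=
  Z_welldefined_pos_general γ We c hγ hWe g hg s hs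
end

section
/- The integral (4/ρ)·∫₀^∞ exp(−2πλ·V(s))·2πλ·Q(s) ds converges and equals (16·W_e/(ρ·c²·γ⁴))·(πλ)^{−(γ+3)/2}·Γ(γ/(γ+2))^{−(γ+5)/2}·Γ((γ−1)/(γ+2))·Γ((γ+5)/2). -/
/-!
Integrating by parts against `-x^{-q}/q` gives, for `0 < q < 1`,
`∫₀^∞ (1 - e^{-ax}) x^{-q-1} dx = (a/q) ∫₀^∞ x^{-q} e^{-ax} dx = a^q Γ(1-q) / q`.
The substitution `x = r^{-γ-2}` turns `V(s)` into this integral with `q = 2/(γ+2)`, so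
`V(s) = (sγ²)^{2/(γ+2)} Γ(γ/(γ+2)) / 2`. In the variable `t = sγ²` the outer integrand is
then a constant times `t^{3/(γ+2)} exp(-πλ Γ(γ/(γ+2)) t^{2/(γ+2)})`, whose integral is
again a value of `Γ`.
-/

open MeasureTheory Real Set Filter Topology

lemma abs_one_sub_exp_neg_le_min {t : ℝ} (ht : 0 ≤ t) : |1 - exp (-t)| ≤ min t 1 := by
  rw [abs_of_nonneg (sub_nonneg.mpr (exp_le_one_iff.mpr (neg_nonpos.mpr ht)))]
  exact le_min (by linarith [one_sub_le_exp_neg t]) (by linarith [exp_pos (-t)])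

section OneSubExpNeg

variable {a q : ℝ}

lemma integrableOn_one_sub_exp_neg_mul_mul_rpow (ha : 0 ≤ a) (hq0 : 0 < q) (hq1 : q < 1) :
    IntegrableOn (fun x => (1 - exp (-(a * x))) * x ^ (-q - 1)) (Ioi 0) := by
  have hmeas : AEStronglyMeasurable (fun x : ℝ => (1 - exp (-(a * x))) * x ^ (-q - 1)) := by
    fun_prop
  have hbound : ∀ x ∈ Ioi (0 : ℝ),
      ‖(1 - exp (-(a * x))) * x ^ (-q - 1)‖ ≤ min (a * x) 1 * x ^ (-q - 1) := fun x hx => by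
    rw [norm_mul, norm_of_nonneg (rpow_nonneg (le_of_lt hx) _)]
    exact mul_le_mul_of_nonneg_right (abs_one_sub_exp_neg_le_min (mul_nonneg ha (le_of_lt hx)))
      (rpow_nonneg (le_of_lt hx) _)
  rw [← Ioc_union_Ioi_eq_Ioi zero_le_one]
  refine IntegrableOn.union ?_ ?_
  · have hdom : IntegrableOn (fun x : ℝ => a * x ^ (-q)) (Ioc 0 1) :=
      ((intervalIntegral.intervalIntegrable_rpow' (by linarith)).1).const_mul a
    refine hdom.mono' hmeas.restrict ((ae_restrict_iff' measurableSet_Ioc).mpr ?_)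
    refine .of_forall fun x ⟨hx0, _⟩ => (hbound x hx0).trans ?_
    calc min (a * x) 1 * x ^ (-q - 1) ≤ a * x * x ^ (-q - 1) := by
          gcongr; exact min_le_left _ _
      _ = a * x ^ (-q) := by
          rw [mul_assoc, ← rpow_one_add' hx0.le (by linarith)]; ring_nf
  · refine (integrableOn_Ioi_rpow_of_lt (show -q - 1 < -1 by linarith) one_pos).mono'
      hmeas.restrict ((ae_restrict_iff' measurableSet_Ioi).mpr (.of_forall fun x hx => ?_))
    have hx0 : 0 < x := zero_lt_one.trans hx
    calc _ ≤ min (a * x) 1 * x ^ (-q - 1) := hbound x hx0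
      _ ≤ 1 * x ^ (-q - 1) := by gcongr; exact min_le_right _ _
      _ = x ^ (-q - 1) := one_mul _

lemma integral_one_sub_exp_neg_mul_mul_rpow (ha : 0 < a) (hq0 : 0 < q) (hq1 : q < 1) :
    ∫ x in Ioi 0, (1 - exp (-(a * x))) * x ^ (-q - 1) = a ^ q * Gamma (1 - q) / q := by
  have hu (x : ℝ) : HasDerivAt (fun x => 1 - exp (-(a * x))) (a * exp (-(a * x))) x :=
    (((hasDerivAt_id x).const_mul a).neg.exp.const_sub 1).congr_deriv
      (by simp only [id_eq, Pi.neg_apply, mul_one, mul_neg, neg_neg]; ring)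
  have hv : ∀ x ∈ Ioi (0 : ℝ), HasDerivAt (fun x => -x ^ (-q) / q) (x ^ (-q - 1)) x :=
    fun x hx => ((hasDerivAt_rpow_const (p := -q) (Or.inl (ne_of_gt hx))).fun_neg.div_const
      q).congr_deriv (by field_simp)
  have huv_le (x : ℝ) (hx : 0 < x) :
      ‖(1 - exp (-(a * x))) * (-x ^ (-q) / q)‖ ≤ min (a * x) 1 * x ^ (-q) / q := by
    rw [norm_mul, norm_div, norm_neg, norm_of_nonneg (rpow_nonneg hx.le _),
      norm_of_nonneg hq0.le, mul_div_assoc]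
    exact mul_le_mul_of_nonneg_right (abs_one_sub_exp_neg_le_min (by positivity))
      (by positivity)
  have huv_zero :
      Tendsto (fun x => (1 - exp (-(a * x))) * (-x ^ (-q) / q)) (𝓝[>] 0) (𝓝 0) := by
    have hlim : Tendsto (fun x : ℝ => a / q * x ^ (1 - q)) (𝓝[>] 0) (𝓝 0) := by
      refine tendsto_nhdsWithin_of_tendsto_nhds ?_
      simpa [zero_rpow (sub_pos.mpr hq1).ne'] using
        ((continuous_rpow_const (sub_pos.mpr hq1).le).tendsto 0).const_mul (a / q)
    refine squeeze_zero_norm' ?_ hlim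
    filter_upwards [self_mem_nhdsWithin] with x (hx : 0 < x)
    calc _ ≤ min (a * x) 1 * x ^ (-q) / q := huv_le x hx
      _ ≤ a * x * x ^ (-q) / q := by gcongr; exact min_le_left _ _
      _ = a / q * x ^ (1 - q) := by rw [rpow_sub hx, rpow_one, rpow_neg hx.le]; field_simp
  have huv_top : Tendsto (fun x => (1 - exp (-(a * x))) * (-x ^ (-q) / q)) atTop (𝓝 0) := by
    refine squeeze_zero_norm' ?_ (by simpa using (tendsto_rpow_neg_atTop hq0).div_const q)
    filter_upwards [eventually_gt_atTop 0] with x hx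
    calc _ ≤ min (a * x) 1 * x ^ (-q) / q := huv_le x hx
      _ ≤ 1 * x ^ (-q) / q := by gcongr; exact min_le_right _ _
      _ = x ^ (-q) / q := by rw [one_mul]
  have hu'v : EqOn (fun x => a * exp (-(a * x)) * (-x ^ (-q) / q))
      (fun x => -(a / q) * (x ^ ((1 - q) - 1) * exp (-(a * x)))) (Ioi 0) := fun x _ => by
    simp only [sub_sub_cancel_left]; ring
  have hgamma := integral_rpow_mul_exp_neg_mul_Ioi (sub_pos.mpr hq1) ha
  have hgamma_int : IntegrableOn (fun x => x ^ ((1 - q) - 1) * exp (-(a * x))) (Ioi 0) :=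
    Integrable.of_integral_ne_zero (by rw [hgamma]; positivity)
  have hu'v_int : IntegrableOn (fun x => a * exp (-(a * x)) * (-x ^ (-q) / q)) (Ioi 0) :=
    IntegrableOn.congr_fun (hgamma_int.const_mul _) hu'v.symm measurableSet_Ioi
  rw [integral_Ioi_mul_deriv_eq_deriv_mul (fun x _ => hu x) hv
    (integrableOn_one_sub_exp_neg_mul_mul_rpow ha.le hq0 hq1) hu'v_int huv_zero huv_top,
    setIntegral_congr_fun measurableSet_Ioi hu'v, integral_const_mul, hgamma,
    one_div, inv_rpow ha.le, ← rpow_neg ha.le, neg_sub, rpow_sub_one ha.ne']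
  field_simp
  ring

end OneSubExpNeg

lemma integral_one_sub_exp_neg_mul_rpow_neg_sub_two_mul_self {a γ : ℝ} (ha : 0 < a)
    (hγ : 0 < γ) :
    ∫ r in Ioi 0, (1 - exp (-(a * r ^ (-γ - 2)))) * r
      = a ^ (2 / (γ + 2)) * Gamma (γ / (γ + 2)) / 2 := by
  have hγ2 : 0 < γ + 2 := by linarith
  have hsubst := integral_comp_rpow_Ioi
    (fun x => (1 - exp (-(a * x))) * x ^ (-(2 / (γ + 2)) - 1)) (p := -γ - 2) (by linarith)
  have hpt : ∀ r ∈ Ioi (0 : ℝ), (|-γ - 2| * r ^ (-γ - 2 - 1)) •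
      ((1 - exp (-(a * r ^ (-γ - 2)))) * (r ^ (-γ - 2)) ^ (-(2 / (γ + 2)) - 1))
        = (γ + 2) * ((1 - exp (-(a * r ^ (-γ - 2)))) * r) := fun r (hr : 0 < r) => by
    have hpow : r ^ (-γ - 2 - 1) * (r ^ (-γ - 2)) ^ (-(2 / (γ + 2)) - 1) = r := by
      rw [← rpow_mul hr.le, ← rpow_add hr,
        show -γ - 2 - 1 + (-γ - 2) * (-(2 / (γ + 2)) - 1) = 1 by field_simp; ring, rpow_one]
    rw [smul_eq_mul, abs_of_neg (by linarith), neg_sub', sub_neg_eq_add]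
    linear_combination ((γ + 2) * (1 - exp (-(a * r ^ (-γ - 2))))) * hpow
  rw [setIntegral_congr_fun measurableSet_Ioi hpt, integral_const_mul,
    integral_one_sub_exp_neg_mul_mul_rpow ha (by positivity)
      ((div_lt_one hγ2).mpr (by linarith)),
    show 1 - 2 / (γ + 2) = γ / (γ + 2) by field_simp; ring] at hsubst
  field_simp at hsubst ⊢
  linarith

theorem narrowband_error_integral_closed_form_general (γ We c lam ρ : ℝ)
    (hγ : 2 < γ) (hlam : 0 < lam)
    (V Q : ℝ → ℝ)
    (hV : ∀ s > 0, V s = ∫ r in Set.Ioi (0 : ℝ),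
      (1 - Real.exp (-(s * γ ^ 2 * r ^ (-γ - 2)))) * r)
    (hQ : ∀ s > 0, Q s = (4 * s * We / (c ^ 2 * (γ + 2))) * (s * γ ^ 2) ^ ((1 - γ) / (γ + 2))
      * Real.Gamma ((γ - 1) / (γ + 2))) :
    IntegrableOn (fun s : ℝ => Real.exp (-(2 * π * lam * V s)) * (2 * π * lam * Q s))
      (Set.Ioi 0) ∧
    (4 / ρ) * ∫ s in Set.Ioi (0 : ℝ), Real.exp (-(2 * π * lam * V s)) * (2 * π * lam * Q s)
      = (16 * We / (ρ * c ^ 2 * γ ^ 4)) * (π * lam) ^ (-((γ + 3) / 2))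
          * Real.Gamma (γ / (γ + 2)) ^ (-((γ + 5) / 2))
          * Real.Gamma ((γ - 1) / (γ + 2)) * Real.Gamma ((γ + 5) / 2) := by
  have hγ2 : 0 < γ + 2 := by linarith
  have hγsq : 0 < γ ^ 2 := by positivity
  have hq : -1 < 3 / (γ + 2) := by linarith [show 0 < 3 / (γ + 2) by positivity]
  set B := π * lam * Gamma (γ / (γ + 2))
  have hB : 0 < B := by positivity
  set K := 2 * π * lam * (4 * We / (c ^ 2 * (γ + 2))) * Gamma ((γ - 1) / (γ + 2)) / γ ^ 2
  set g : ℝ → ℝ := fun t => t ^ (3 / (γ + 2)) * exp (-B * t ^ (2 / (γ + 2)))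
  have heq : EqOn (fun s => exp (-(2 * π * lam * V s)) * (2 * π * lam * Q s))
      (fun s => K * g (s * γ ^ 2)) (Ioi 0) := fun s (hs : 0 < s) => by
    have hsγ : 0 < s * γ ^ 2 := by positivity
    have hexp : 1 + (1 - γ) / (γ + 2) = 3 / (γ + 2) := by field_simp; ring
    have hsplit :
        (s * γ ^ 2) ^ (3 / (γ + 2)) = s * γ ^ 2 * (s * γ ^ 2) ^ ((1 - γ) / (γ + 2)) := by
      rw [← rpow_one_add' hsγ.le (by rw [hexp]; positivity), hexp]
    beta_reduce
    rw [hV s hs, hQ s hs,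
      integral_one_sub_exp_neg_mul_rpow_neg_sub_two_mul_self hsγ (by linarith)]
    simp only [g, B, K, hsplit]
    field_simp
  have hg : IntegrableOn (fun s => g (s * γ ^ 2)) (Ioi 0) := by
    rw [integrableOn_Ioi_comp_mul_right_iff g 0 hγsq, zero_mul]
    exact integrableOn_rpow_mul_exp_neg_mul_rpow hq (by positivity) hB
  refine ⟨IntegrableOn.congr_fun (hg.const_mul K) heq.symm measurableSet_Ioi, ?_⟩
  rw [setIntegral_congr_fun measurableSet_Ioi heq, integral_const_mul,
    integral_comp_mul_right_Ioi g 0 hγsq, zero_mul, smul_eq_mul,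
    integral_rpow_mul_exp_neg_mul_rpow (by positivity) hq hB, neg_div,
    show (3 / (γ + 2) + 1) / (2 / (γ + 2)) = (γ + 5) / 2 by field_simp; ring,
    mul_rpow (by positivity) (by positivity), show -((γ + 3) / 2) = -((γ + 5) / 2) + 1 by ring,
    rpow_add_one (by positivity)]
  simp only [K]
  field_simp
  ring

/-- With `V(s) = ∫₀^∞ (1 − exp(−s·γ²·r^{−γ−2}))·r dr` and
`Q(s) = (4·s·W_e/(c²·(γ+2)))·(s·γ²)^{(1−γ)/(γ+2)}·Γ((γ−1)/(γ+2))`, the integral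
`(4/ρ)·∫₀^∞ exp(−2πλ·V(s))·2πλ·Q(s) ds` converges and equals
`(16·W_e/(ρ·c²·γ⁴))·(πλ)^{−(γ+3)/2}·Γ(γ/(γ+2))^{−(γ+5)/2}·Γ((γ−1)/(γ+2))·Γ((γ+5)/2)`. -/
theorem narrowband_error_integral_closed_form (γ We c lam ρ : ℝ)
    (hγ : 2 < γ) (hWe : 0 < We) (hc : 0 < c) (hlam : 0 < lam) (hρ : 0 < ρ)
    (V Q : ℝ → ℝ)
    (hV : ∀ s > 0, V s = ∫ r in Set.Ioi (0 : ℝ),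
      (1 - Real.exp (-(s * γ ^ 2 * r ^ (-γ - 2)))) * r)
    (hQ : ∀ s > 0, Q s = (4 * s * We / (c ^ 2 * (γ + 2))) * (s * γ ^ 2) ^ ((1 - γ) / (γ + 2))
      * Real.Gamma ((γ - 1) / (γ + 2))) :
    IntegrableOn (fun s : ℝ => Real.exp (-(2 * π * lam * V s)) * (2 * π * lam * Q s))
      (Set.Ioi 0) ∧
    (4 / ρ) * ∫ s in Set.Ioi (0 : ℝ), Real.exp (-(2 * π * lam * V s)) * (2 * π * lam * Q s)
      = (16 * We / (ρ * c ^ 2 * γ ^ 4)) * (π * lam) ^ (-((γ + 3) / 2))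
          * Real.Gamma (γ / (γ + 2)) ^ (-((γ + 5) / 2))
          * Real.Gamma ((γ - 1) / (γ + 2)) * Real.Gamma ((γ + 5) / 2) :=
  narrowband_error_integral_closed_form_general γ We c lam ρ hγ hlam V Q hV hQ
end

section
/- Regarding CRB_LB as a function of the sensor density λ (with γ, W_e, c, ρ fixed), CRB_LB is strictly decreasing in λ: if 0 < λ₁ < λ₂ then CRB_LB(λ₂) < CRB_LB(λ₁). -/
/-!
For `s > 0` the integrand of `Z(s)` is at least `(1 - e⁻¹) r` on the disc where `s g(r) ≥ 1`, and
since `g(r) ≥ γ² r^{-(γ+2)}` this disc has radius at least `(γ² s)^{1/(γ+2)}`; hence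
`Z(s) ≥ K s^{2/(γ+2)}` with `K > 0`. So `exp(-2πλZ(s))` is dominated by a stretched exponential,
which makes it integrable, and it decreases strictly in `λ` at every `s > 0` because `Z(s) > 0`.
Monotonicity of `Z` only serves to make the integrand measurable.
-/

open MeasureTheory Real Set

theorem setIntegral_lt_setIntegral_of_forall_lt {α : Type*} [MeasurableSpace α] {μ : Measure α}
    {s : Set α} {f g : α → ℝ} (hs : MeasurableSet s) (hμs : μ s ≠ 0)
    (hf : IntegrableOn f s μ) (hg : IntegrableOn g s μ) (hfg : ∀ x ∈ s, f x < g x) :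
    ∫ x in s, f x ∂μ < ∫ x in s, g x ∂μ := by
  have hsupp : s ⊆ Function.support (g - f) := fun x hx => (sub_pos.2 (hfg x hx)).ne'
  have hpos : 0 < ∫ x in s, (g - f) x ∂μ := by
    rw [setIntegral_pos_iff_support_of_nonneg_ae ?_ (hg.sub hf),
      inter_eq_self_of_subset_right hsupp]
    · exact pos_iff_ne_zero.2 hμs
    · filter_upwards [ae_restrict_mem hs] with x hx using (sub_pos.2 (hfg x hx)).le
  rw [integral_sub' hg hf] at hpos
  linarith

section ExpNegMul

variable {Z : ℝ → ℝ} {K p : ℝ}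

theorem integrableOn_exp_neg_mul_of_mul_rpow_le (hK : 0 < K) (hp : 0 < p)
    (hZ : MonotoneOn Z (Ioi 0)) (hZK : ∀ s ∈ Ioi 0, K * s ^ p ≤ Z s) {t : ℝ} (ht : 0 < t) :
    IntegrableOn (fun s => exp (-(t * Z s))) (Ioi 0) := by
  have hmeas : AEStronglyMeasurable (fun s => exp (-(t * Z s))) (volume.restrict (Ioi 0)) := by
    refine (aemeasurable_restrict_of_antitoneOn measurableSet_Ioi ?_).aestronglyMeasurable
    intro a ha b hb hab
    exact exp_le_exp.2 (neg_le_neg (mul_le_mul_of_nonneg_left (hZ ha hb hab) ht.le))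
  have hdom : IntegrableOn (fun s : ℝ => s ^ (0 : ℝ) * exp (-(t * K) * s ^ p)) (Ioi 0) :=
    integrableOn_rpow_mul_exp_neg_mul_rpow (by norm_num) hp (mul_pos ht hK)
  refine Integrable.mono' hdom hmeas ?_
  filter_upwards [ae_restrict_mem measurableSet_Ioi] with s hs
  rw [norm_of_nonneg (exp_pos _).le, rpow_zero, one_mul, neg_mul, mul_assoc]
  exact exp_le_exp.2 (neg_le_neg (mul_le_mul_of_nonneg_left (hZK s hs) ht.le))

theorem strictAntiOn_setIntegral_exp_neg_mul (hK : 0 < K) (hp : 0 < p)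
    (hZ : MonotoneOn Z (Ioi 0)) (hZK : ∀ s ∈ Ioi 0, K * s ^ p ≤ Z s) :
    StrictAntiOn (fun t => ∫ s in Ioi 0, exp (-(t * Z s))) (Ioi 0) := by
  intro t₁ ht₁ t₂ ht₂ ht
  refine setIntegral_lt_setIntegral_of_forall_lt measurableSet_Ioi (by simp)
    (integrableOn_exp_neg_mul_of_mul_rpow_le hK hp hZ hZK ht₂)
    (integrableOn_exp_neg_mul_of_mul_rpow_le hK hp hZ hZK ht₁) fun s hs => ?_
  have hZs : 0 < Z s := (mul_pos hK (rpow_pos_of_pos hs p)).trans_le (hZK s hs)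
  exact exp_lt_exp.2 (neg_lt_neg (mul_lt_mul_of_pos_right ht hZs))

end ExpNegMul

section Coverage

variable {G : ℝ → ℝ}

theorem integrableOn_one_sub_exp_neg_mul_mul (hG0 : ∀ r ∈ Ioi 0, 0 ≤ G r)
    (hGc : ContinuousOn G (Ioi 0)) (hGi : IntegrableOn (fun r => G r * r) (Ioi 1))
    {s : ℝ} (hs : 0 ≤ s) :
    IntegrableOn (fun r => (1 - exp (-s * G r)) * r) (Ioi 0) := by
  have hcont : ContinuousOn (fun r => (1 - exp (-s * G r)) * r) (Ioi 0) := by fun_prop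
  have hnonneg : ∀ r ∈ Ioi 0, 0 ≤ 1 - exp (-s * G r) := fun r hr =>
    sub_nonneg.2 (exp_le_one_iff.2 (by nlinarith [hG0 r hr]))
  rw [← Ioc_union_Ioi_eq_Ioi zero_le_one]
  refine IntegrableOn.union ?_ ?_
  · refine Integrable.mono' (integrable_const (1 : ℝ))
      ((hcont.mono Ioc_subset_Ioi_self).aestronglyMeasurable measurableSet_Ioc) ?_
    filter_upwards [ae_restrict_mem measurableSet_Ioc] with r hr
    rw [norm_of_nonneg (mul_nonneg (hnonneg r hr.1) hr.1.le)]
    exact mul_le_one₀ (by linarith [exp_pos (-s * G r)]) hr.1.le hr.2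
  · refine Integrable.mono' (hGi.const_mul s)
      ((hcont.mono (Ioi_subset_Ioi zero_le_one)).aestronglyMeasurable measurableSet_Ioi) ?_
    filter_upwards [ae_restrict_mem measurableSet_Ioi] with r hr
    have hr0 : (0 : ℝ) < r := one_pos.trans hr
    rw [norm_of_nonneg (mul_nonneg (hnonneg r hr0) hr0.le), ← mul_assoc]
    refine mul_le_mul_of_nonneg_right ?_ hr0.le
    have := one_sub_le_exp_neg (s * G r)
    rw [← neg_mul] at this
    linarith

theorem monotoneOn_setIntegral_one_sub_exp_neg_mul (hG0 : ∀ r ∈ Ioi 0, 0 ≤ G r)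
    (hint : ∀ s ∈ Ioi 0, IntegrableOn (fun r => (1 - exp (-s * G r)) * r) (Ioi 0)) :
    MonotoneOn (fun s => ∫ r in Ioi 0, (1 - exp (-s * G r)) * r) (Ioi 0) := by
  intro s₁ hs₁ s₂ hs₂ hs
  refine setIntegral_mono_on (hint s₁ hs₁) (hint s₂ hs₂) measurableSet_Ioi fun r hr => ?_
  have : exp (-s₂ * G r) ≤ exp (-s₁ * G r) :=
    exp_le_exp.2 (mul_le_mul_of_nonneg_right (neg_le_neg hs) (hG0 r hr))
  exact mul_le_mul_of_nonneg_right (by linarith) (le_of_lt hr)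

theorem mul_sq_le_setIntegral_one_sub_exp_neg_mul (hG0 : ∀ r ∈ Ioi 0, 0 ≤ G r) {s R : ℝ}
    (hs : 0 ≤ s) (hint : IntegrableOn (fun r => (1 - exp (-s * G r)) * r) (Ioi 0))
    (hR : 0 ≤ R) (hGR : ∀ r ∈ Ioc 0 R, 1 ≤ s * G r) :
    (1 - exp (-1)) * (R ^ 2 / 2) ≤ ∫ r in Ioi 0, (1 - exp (-s * G r)) * r := by
  have hIoc : ∫ r in Ioc 0 R, (1 - exp (-1)) * r = (1 - exp (-1)) * (R ^ 2 / 2) := by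
    rw [integral_const_mul, ← intervalIntegral.integral_of_le hR, integral_id]
    ring
  calc (1 - exp (-1)) * (R ^ 2 / 2)
      = ∫ r in Ioc 0 R, (1 - exp (-1)) * r := hIoc.symm
    _ ≤ ∫ r in Ioc 0 R, (1 - exp (-s * G r)) * r := by
        refine setIntegral_mono_on (continuous_const.mul continuous_id).integrableOn_Ioc
          (hint.mono_set Ioc_subset_Ioi_self) measurableSet_Ioc fun r hr => ?_
        have : exp (-s * G r) ≤ exp (-1) := exp_le_exp.2 (by linarith [hGR r hr, neg_mul s (G r)])
        exact mul_le_mul_of_nonneg_right (by linarith) hr.1.le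
    _ ≤ ∫ r in Ioi 0, (1 - exp (-s * G r)) * r := by
        refine setIntegral_mono_set hint ?_ Ioc_subset_Ioi_self.eventuallyLE
        filter_upwards [ae_restrict_mem measurableSet_Ioi] with r hr
        exact mul_nonneg (sub_nonneg.2 (exp_le_one_iff.2 (by nlinarith [hG0 r hr])))
          (le_of_lt hr)

theorem mul_rpow_le_setIntegral_one_sub_exp_neg_mul {a q s : ℝ} (ha : 0 < a) (hq : 0 < q)
    (hs : 0 < s) (hGa : ∀ r ∈ Ioi 0, a * r ^ (-q) ≤ G r)
    (hint : IntegrableOn (fun r => (1 - exp (-s * G r)) * r) (Ioi 0)) :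
    (1 - exp (-1)) / 2 * a ^ (2 / q) * s ^ (2 / q) ≤ ∫ r in Ioi 0, (1 - exp (-s * G r)) * r := by
  have has : 0 < a * s := mul_pos ha hs
  set R := (a * s) ^ q⁻¹ with hRdef
  have hR : 0 < R := rpow_pos_of_pos has _
  have hRq : R ^ (-q) = (a * s)⁻¹ := by
    rw [← rpow_mul has.le, inv_mul_eq_div, neg_div, div_self hq.ne', rpow_neg_one]
  have hR2 : R ^ 2 = a ^ (2 / q) * s ^ (2 / q) := by
    rw [← rpow_natCast, ← rpow_mul has.le, mul_rpow ha.le hs.le]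
    norm_num [div_eq_inv_mul]
  have hG0 : ∀ r ∈ Ioi 0, 0 ≤ G r := fun r hr =>
    (mul_pos ha (rpow_pos_of_pos hr _)).le.trans (hGa r hr)
  have hGR : ∀ r ∈ Ioc 0 R, 1 ≤ s * G r := by
    intro r hr
    have hrq : (a * s)⁻¹ ≤ r ^ (-q) := hRq ▸ rpow_le_rpow_of_nonpos hr.1 hr.2 (by linarith)
    calc (1 : ℝ) = s * (a * (a * s)⁻¹) := by field_simp
      _ ≤ s * (a * r ^ (-q)) := by gcongr
      _ ≤ s * G r := by gcongr; exact hGa r hr.1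
  have := mul_sq_le_setIntegral_one_sub_exp_neg_mul hG0 hs.le hint hR.le hGR
  rw [hR2] at this
  linarith

end Coverage

noncomputable def rangingInfo (γ We c r : ℝ) : ℝ := r ^ (-γ - 2) * (γ ^ 2 + 4 * We * r ^ 2 / c ^ 2)

section RangingInfo

variable {γ We c : ℝ}

theorem sq_mul_rpow_le_rangingInfo (hWe : 0 ≤ We) {r : ℝ} (hr : 0 < r) :
    γ ^ 2 * r ^ (-(γ + 2)) ≤ rangingInfo γ We c r := by
  rw [rangingInfo, neg_add', mul_comm]
  exact mul_le_mul_of_nonneg_left (le_add_of_nonneg_right (by positivity))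
    (rpow_pos_of_pos hr _).le

theorem continuousOn_rangingInfo : ContinuousOn (rangingInfo γ We c) (Ioi 0) :=
  (continuousOn_id.rpow_const fun _ hr => Or.inl (ne_of_gt hr)).mul (by fun_prop)

theorem integrableOn_rangingInfo_mul (hγ : 2 < γ) :
    IntegrableOn (fun r => rangingInfo γ We c r * r) (Ioi 1) := by
  have h₁ := (integrableOn_Ioi_rpow_of_lt (show -γ - 1 < -1 by linarith) one_pos).const_mul
    (γ ^ 2)
  have h₂ := (integrableOn_Ioi_rpow_of_lt (show -γ + 1 < -1 by linarith) one_pos).const_mul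
    (4 * We / c ^ 2)
  refine IntegrableOn.congr_fun (h₁.add h₂) (fun r hr => ?_) measurableSet_Ioi
  have hr0 : (0 : ℝ) < r := one_pos.trans hr
  rw [Pi.add_apply, rangingInfo, show -γ - 1 = (-γ - 2) + 1 by ring,
    show -γ + 1 = (-γ - 2) + 3 by ring, rpow_add hr0, rpow_add hr0, rpow_one]
  norm_num
  ring

end RangingInfo

theorem CRB_LB_strictAnti_in_density_general (γ We c ρ : ℝ)
    (hγ : 2 < γ) (hWe : 0 < We) (hρ : 0 < ρ)
    (g Z : ℝ → ℝ) (CRB_LB : ℝ → ℝ)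
    (hg : ∀ r > 0, g r = r ^ (-γ - 2) * (γ ^ 2 + 4 * We * r ^ 2 / c ^ 2))
    (hZ : ∀ s > 0, Z s = ∫ r in Set.Ioi (0 : ℝ), (1 - Real.exp (-s * g r)) * r)
    (hLB : ∀ lam > 0, CRB_LB lam
      = (4 / ρ) * ∫ s in Set.Ioi (0 : ℝ), Real.exp (-(2 * π * lam * Z s)))
    (lam₁ lam₂ : ℝ) (h₁ : 0 < lam₁) (h₁₂ : lam₁ < lam₂) :
    CRB_LB lam₂ < CRB_LB lam₁ := by
  have hgEq : EqOn g (rangingInfo γ We c) (Ioi 0) := fun r hr => hg r hr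
  have hg_lower : ∀ r ∈ Ioi 0, γ ^ 2 * r ^ (-(γ + 2)) ≤ g r := fun r hr =>
    (hgEq hr).symm ▸ sq_mul_rpow_le_rangingInfo hWe.le hr
  have hg0 : ∀ r ∈ Ioi 0, 0 ≤ g r := fun r hr =>
    (mul_nonneg (sq_nonneg γ) (rpow_nonneg (le_of_lt hr) _)).trans (hg_lower r hr)
  have hg_mul : IntegrableOn (fun r => g r * r) (Ioi 1) :=
    (integrableOn_rangingInfo_mul hγ).congr_fun
      (fun r hr => by rw [hgEq (mem_Ioi.2 (one_pos.trans hr))]) measurableSet_Ioi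
  have hint : ∀ s ∈ Ioi 0, IntegrableOn (fun r => (1 - exp (-s * g r)) * r) (Ioi 0) :=
    fun s hs => integrableOn_one_sub_exp_neg_mul_mul hg0
      (continuousOn_rangingInfo.congr hgEq) hg_mul (le_of_lt hs)
  have hZ_mono : MonotoneOn Z (Ioi 0) :=
    (monotoneOn_setIntegral_one_sub_exp_neg_mul hg0 hint).congr fun s hs => (hZ s hs).symm
  have hZ_lower : ∀ s ∈ Ioi 0,
      (1 - exp (-1)) / 2 * (γ ^ 2) ^ (2 / (γ + 2)) * s ^ (2 / (γ + 2)) ≤ Z s := fun s hs =>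
    (hZ s hs).symm ▸ mul_rpow_le_setIntegral_one_sub_exp_neg_mul (by positivity) (by linarith)
      hs hg_lower (hint s hs)
  have hK : 0 < (1 - exp (-1)) / 2 * (γ ^ 2) ^ (2 / (γ + 2)) := by
    have : 0 < 1 - exp (-1) := sub_pos.2 (exp_lt_one_iff.2 (by norm_num))
    positivity
  have hanti := strictAntiOn_setIntegral_exp_neg_mul hK (by positivity) hZ_mono hZ_lower
  have h₂ : 0 < lam₂ := h₁.trans h₁₂
  rw [hLB lam₁ h₁, hLB lam₂ h₂]
  refine mul_lt_mul_of_pos_left (hanti ?_ ?_ (by gcongr)) (by positivity) <;>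
    exact mem_Ioi.2 (by positivity)

/-- Regarding `CRB_LB` as a function of the sensor density `λ` (with `γ, W_e, c, ρ` fixed),
`CRB_LB` is strictly decreasing: if `0 < λ₁ < λ₂` then `CRB_LB(λ₂) < CRB_LB(λ₁)`. -/
theorem CRB_LB_strictAnti_in_density (γ We c ρ : ℝ)
    (hγ : 2 < γ) (hWe : 0 < We) (hc : 0 < c) (hρ : 0 < ρ)
    (g Z : ℝ → ℝ) (CRB_LB : ℝ → ℝ)
    (hg : ∀ r > 0, g r = r ^ (-γ - 2) * (γ ^ 2 + 4 * We * r ^ 2 / c ^ 2))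
    (hZ : ∀ s > 0, Z s = ∫ r in Set.Ioi (0 : ℝ), (1 - Real.exp (-s * g r)) * r)
    (hLB : ∀ lam > 0, CRB_LB lam
      = (4 / ρ) * ∫ s in Set.Ioi (0 : ℝ), Real.exp (-(2 * π * lam * Z s)))
    (lam₁ lam₂ : ℝ) (h₁ : 0 < lam₁) (h₁₂ : lam₁ < lam₂) :
    CRB_LB lam₂ < CRB_LB lam₁ :=
  CRB_LB_strictAnti_in_density_general γ We c ρ hγ hWe hρ g Z CRB_LB hg hZ hLB lam₁ lam₂ h₁ h₁₂
end

section
/- Let (Ω, F, P) be a probability space, let γ > 2 and λ > 0 be real numbers, and let (C_m)_{m≥1} be an independent family of random variables such that for each m ≥ 1 the law of C_m is the Poisson distribution with mean λ·π·(2m+1). Then the series ∑_{m=1}^∞ m^{−γ}·C_m converges to a finite limit P-almost surely. -/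
/-!
The terms are nonnegative, so by monotone convergence it suffices that the expectation of the
series is finite. That expectation is `∑ (m + 1) ^ (-γ) * λπ(2m + 3)`, whose terms are
`O(m ^ (1 - γ))`, summable because `γ > 2`.
-/

open MeasureTheory Real ProbabilityTheory
open scoped ENNReal NNReal Nat

namespace ProbabilityTheory

lemma hasSum_natCast_mul_poissonMeasure_singleton (r : ℝ≥0) :
    HasSum (fun n : ℕ => (n : ℝ) * (exp (-r) * r ^ n / n !)) r := by
  -- `(n + 1) * p (n + 1) = r * p n`, so the shifted series is `r` times the total mass
  have hshift :
      HasSum (fun n : ℕ => ((n + 1 : ℕ) : ℝ) * (exp (-r) * r ^ (n + 1) / (n + 1)!)) r := by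
    have hmass := (hasSum_one_poissonMeasure r).mul_left (r : ℝ)
    rw [mul_one] at hmass
    refine hmass.congr_fun fun n => ?_
    rw [Nat.factorial_succ]
    push_cast
    field_simp
    ring
  simpa using
    (hasSum_nat_add_iff (f := fun n : ℕ => (n : ℝ) * (exp (-r) * r ^ n / n !)) 1).mp hshift

lemma lintegral_natCast_poissonMeasure (r : ℝ≥0) :
    ∫⁻ n, (n : ℝ≥0∞) ∂Po(r) = r := by
  have hmean := hasSum_natCast_mul_poissonMeasure_singleton r
  simp only [poissonMeasure, lintegral_sum_measure, lintegral_smul_measure, lintegral_dirac,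
    smul_eq_mul]
  have hmean_ennreal := congrArg ENNReal.ofReal hmean.tsum_eq
  rw [ENNReal.ofReal_tsum_of_nonneg (fun n => by positivity) hmean.summable,
    ENNReal.ofReal_coe_nnreal] at hmean_ennreal
  rw [← hmean_ennreal]
  refine tsum_congr fun n => ?_
  rw [ENNReal.ofReal_mul (by positivity), ENNReal.ofReal_natCast, mul_comm]

lemma hasLaw_of_measure_eq_singleton {Ω 𝓧 : Type*} [MeasurableSpace Ω] [MeasurableSpace 𝓧]
    [Countable 𝓧] [MeasurableSingletonClass 𝓧] {P : Measure Ω} {μ : Measure 𝓧} {X : Ω → 𝓧}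
    (hX : Measurable X) (h : ∀ x, P {ω | X ω = x} = μ {x}) : HasLaw X μ P where
  aemeasurable := hX.aemeasurable
  map_eq := Measure.ext_of_singleton fun x => by
    rw [Measure.map_apply hX (measurableSet_singleton x)]
    exact h x

lemma HasLaw.lintegral_natCast_poissonMeasure {Ω : Type*} [MeasurableSpace Ω] {P : Measure Ω}
    {X : Ω → ℕ} {r : ℝ≥0} (hX : HasLaw X Po(r) P) :
    ∫⁻ ω, (X ω : ℝ≥0∞) ∂P = r := by
  rw [hX.lintegral_comp (by fun_prop), ProbabilityTheory.lintegral_natCast_poissonMeasure]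

end ProbabilityTheory

lemma ae_summable_of_tsum_lintegral_ne_top {Ω : Type*} [MeasurableSpace Ω] {P : Measure Ω}
    {f : ℕ → Ω → ℝ} (hf : ∀ m, AEMeasurable (f m) P) (hf_nonneg : ∀ m ω, 0 ≤ f m ω)
    (h : ∑' m, ∫⁻ ω, ENNReal.ofReal (f m ω) ∂P ≠ ∞) :
    ∀ᵐ ω ∂P, Summable fun m => f m ω := by
  rw [← lintegral_tsum fun m => (hf m).ennreal_ofReal] at h
  filter_upwards [ae_lt_top' (by fun_prop) h] with ω hω
  simpa [ENNReal.toReal_ofReal (hf_nonneg _ ω)] using ENNReal.summable_toReal hω.ne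

lemma summable_rpow_neg_mul_affine {γ : ℝ} (hγ : 2 < γ) (a b : ℝ) :
    Summable fun m : ℕ => ((m : ℝ) + 1) ^ (-γ) * (a * ((m : ℝ) + 1) + b) := by
  have hshift {p : ℝ} (hp : p < -1) : Summable fun m : ℕ => ((m : ℝ) + 1) ^ p := by
    simpa using (summable_nat_add_iff 1).mpr (Real.summable_nat_rpow.mpr hp)
  refine (((hshift (p := -γ + 1) (by linarith)).mul_left a).add
    ((hshift (p := -γ) (by linarith)).mul_left b)).congr fun m => ?_
  rw [Real.rpow_add_one (by positivity)]
  ring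

theorem poisson_series_converges_as_general {Ω : Type*} [MeasurableSpace Ω]
    (P : Measure Ω)
    (γ lam : ℝ) (hγ : 2 < γ) (hlam : 0 < lam)
    (C : ℕ → Ω → ℕ) (hmeas : ∀ m, Measurable (C m))
    (hlaw : ∀ m k, P {ω | C m ω = k}
      = ENNReal.ofReal (Real.exp (-(lam * π * (2 * (m + 1) + 1)))
          * (lam * π * (2 * (m + 1) + 1)) ^ k / (Nat.factorial k))) :
    ∀ᵐ ω ∂P, Summable (fun m : ℕ => ((m : ℝ) + 1) ^ (-γ) * (C m ω : ℝ)) := by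
  let r (m : ℕ) : ℝ≥0 := ⟨lam * π * (2 * (m + 1) + 1), by positivity⟩
  have hC (m : ℕ) : HasLaw (C m) Po(r m) P :=
    hasLaw_of_measure_eq_singleton (hmeas m) fun k =>
      (hlaw m k).trans (poissonMeasure_singleton (r m) k).symm
  have hmean (m : ℕ) : ∫⁻ ω, ENNReal.ofReal (((m : ℝ) + 1) ^ (-γ) * C m ω) ∂P
      = ENNReal.ofReal (((m : ℝ) + 1) ^ (-γ) * r m) := by
    have hweight : 0 ≤ ((m : ℝ) + 1) ^ (-γ) := by positivity
    simp_rw [ENNReal.ofReal_mul hweight, ENNReal.ofReal_natCast]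
    rw [lintegral_const_mul _ (by fun_prop), (hC m).lintegral_natCast_poissonMeasure,
      ENNReal.ofReal_coe_nnreal]
  have hsummable : Summable fun m : ℕ => ((m : ℝ) + 1) ^ (-γ) * r m := by
    refine (summable_rpow_neg_mul_affine hγ (2 * lam * π) (lam * π)).congr fun m => ?_
    change _ = _ * (lam * π * (2 * ((m : ℝ) + 1) + 1))
    ring
  refine ae_summable_of_tsum_lintegral_ne_top (fun m => by fun_prop) (fun m ω => by positivity) ?_
  simp_rw [hmean, ← ENNReal.ofReal_tsum_of_nonneg (fun m => by positivity) hsummable]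
  exact ENNReal.ofReal_ne_top

/-- Let `γ > 2`, `λ > 0`, and let `(C m)_{m ∈ ℕ}` be an independent family of
`ℕ`-valued random variables where `C m` plays the role of `C_{m+1}` in the paper,
i.e. the law of `C m` is Poisson with mean `λ·π·(2·(m+1)+1)`. Then the series
`∑_{m≥1} m^{−γ}·C_m = ∑_{m ∈ ℕ} (m+1)^{−γ}·C m` converges to a finite limit
`P`-almost surely. -/
theorem poisson_series_converges_as {Ω : Type*} [MeasurableSpace Ω]
    (P : Measure Ω) [IsProbabilityMeasure P]
    (γ lam : ℝ) (hγ : 2 < γ) (hlam : 0 < lam)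
    (C : ℕ → Ω → ℕ) (hmeas : ∀ m, Measurable (C m))
    (hindep : iIndepFun C P)
    (hlaw : ∀ m k, P {ω | C m ω = k}
      = ENNReal.ofReal (Real.exp (-(lam * π * (2 * (m + 1) + 1)))
          * (lam * π * (2 * (m + 1) + 1)) ^ k / (Nat.factorial k))) :
    ∀ᵐ ω ∂P, Summable (fun m : ℕ => ((m : ℝ) + 1) ^ (-γ) * (C m ω : ℝ)) :=
  poisson_series_converges_as_general P γ lam hγ hlam C hmeas hlaw
end

section
/- Let ι be a finite linearly ordered index set, and let (g_i)_{i∈ι} and (φ_i)_{i∈ι} be families of real numbers. Let M be the 2×2 real matrix M = ∑_{i∈ι} g_i · [[cos²(φ_i), sin(φ_i)·cos(φ_i)], [sin(φ_i)·cos(φ_i), sin²(φ_i)]]. Then det(M) = ∑_{i<j} g_i·g_j·sin²(φ_i − φ_j), where the sum on the right runs over all pairs i < j in ι. -/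
open Real Finset Matrix

/-!
Each summand is `g i` times the rank-one matrix `vᵢ vᵢᵀ` with `vᵢ = (cos φᵢ, sin φᵢ)`.
Expanding the determinant of a sum of `2 × 2` matrices gives a double sum over pairs `(i, j)`;
for rank-one symmetric summands the diagonal terms vanish and the terms for `(i, j)` and `(j, i)`
add up to `g i * g j * (vᵢ × vⱼ)²`, where the cross product is `sin (φⱼ - φᵢ)`.
-/

theorem Finset.sum_sum_eq_sum_sum_lt_add {ι M : Type*} [Fintype ι] [LinearOrder ι]
    [AddCommMonoid M] (f : ι → ι → M) (hdiag : ∀ i, f i i = 0) :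
    ∑ i, ∑ j, f i j = ∑ i, ∑ j with i < j, (f i j + f j i) := by
  have split : ∀ i j, f i j = (if i < j then f i j else 0) + (if j < i then f i j else 0) := by
    intro i j
    rcases lt_trichotomy i j with h | rfl | h
    · simp [h, h.not_gt]
    · simp [hdiag]
    · simp [h, h.not_gt]
  calc ∑ i, ∑ j, f i j
      = ∑ i, ∑ j with i < j, f i j + ∑ i, ∑ j with j < i, f i j := by
        simp_rw [sum_filter, ← sum_add_distrib, ← split]
    _ = ∑ i, ∑ j with i < j, (f i j + f j i) := by
        rw [sum_comm' (by simp : ∀ i j, i ∈ univ ∧ j ∈ ({k | k < i} : Finset ι) ↔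
          i ∈ ({k | j < k} : Finset ι) ∧ j ∈ univ), ← sum_add_distrib]
        simp_rw [sum_add_distrib]

theorem Matrix.det_fin_two_sum {ι R : Type*} [CommRing R] (s : Finset ι)
    (A : ι → Matrix (Fin 2) (Fin 2) R) :
    (∑ i ∈ s, A i).det = ∑ i ∈ s, ∑ j ∈ s, (A i 0 0 * A j 1 1 - A i 0 1 * A j 1 0) := by
  simp only [det_fin_two, sum_apply, sum_mul_sum, ← sum_sub_distrib]

theorem Matrix.det_sum_smul_vecMulVec_self_fin_two {ι R : Type*} [Fintype ι] [LinearOrder ι]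
    [CommRing R] (g : ι → R) (v : ι → Fin 2 → R) :
    (∑ i, g i • vecMulVec (v i) (v i)).det
      = ∑ i, ∑ j with i < j, g i * g j * (v i 0 * v j 1 - v i 1 * v j 0) ^ 2 := by
  rw [det_fin_two_sum, sum_sum_eq_sum_sum_lt_add]
  · simp only [smul_apply, vecMulVec_apply, smul_eq_mul]
    congr! 2 with i - j -
    ring
  · intro i
    simp only [smul_apply, vecMulVec_apply, smul_eq_mul]
    ring

/-- For a finite linearly ordered index set `ι` and families `(g_i)`, `(φ_i)` of reals,
the determinant of `M = ∑ i, g i · [[cos²φᵢ, sin φᵢ cos φᵢ], [sin φᵢ cos φᵢ, sin²φᵢ]]`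
equals `∑_{i<j} g_i·g_j·sin²(φᵢ − φⱼ)`. -/
theorem det_fisher_sum (ι : Type*) [Fintype ι] [LinearOrder ι] (g φ : ι → ℝ) :
    (∑ i : ι, g i • !![Real.cos (φ i) ^ 2, Real.sin (φ i) * Real.cos (φ i);
        Real.sin (φ i) * Real.cos (φ i), Real.sin (φ i) ^ 2]).det
      = ∑ i : ι, ∑ j ∈ Finset.univ.filter (fun j => i < j),
          g i * g j * Real.sin (φ i - φ j) ^ 2 := by
  have rank_one : ∀ i, !![Real.cos (φ i) ^ 2, Real.sin (φ i) * Real.cos (φ i);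
      Real.sin (φ i) * Real.cos (φ i), Real.sin (φ i) ^ 2]
        = vecMulVec ![cos (φ i), sin (φ i)] ![cos (φ i), sin (φ i)] := by
    intro i
    ext a b
    fin_cases a <;> fin_cases b <;> simp [vecMulVec_apply, sq, mul_comm]
  simp_rw [rank_one, det_sum_smul_vecMulVec_self_fin_two, sin_sub]
  congr! 2 with i - j -
  simp only [cons_val_zero, cons_val_one]
  ring
end
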